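/- Suppose σ > 0, each B_j satisfies B_j ⪰ σI, and each ∇f_j is Lipschitz continuous. Then for x ∈ ℝⁿ the following are equivalent: (i) x is a critical point of F; (ii) d(x) = 0, where d(x) is the unique minimizer of Q(x,·); (iii) θ(x) = 0. -/

import Mathlib

/-!
Along a ray, `Q_j(x, t d) = t F_j'(x; d) + o(t)` as `t → 0⁺`, while convexity of `g_j` gives
`F_j'(x; d) ≤ Q_j(x, d) - ½⟨d, B_j d⟩`. Hence `x` is critical exactly when `Q(x, ·) ≥ 0`, i.e. when
`θ(x) = Q(x, d(x)) = 0`. Comparing `d(x)` with `d(x) / 2` and using that `Q(x, ·)` is `σ`-strongly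
convex gives `Q(x, d(x)) ≤ -(σ/4)‖d(x)‖²`, so `Q(x, d(x)) = 0` forces `d(x) = 0`.
-/

open Filter Topology
open scoped RealInnerProductSpace BigOperators

noncomputable section

namespace NPQN

variable {n m : ℕ}

/-- The quadratic form `⟨d, B d⟩` of a matrix `B` acting on Euclidean space. -/
def mquad (B : Matrix (Fin n) (Fin n) ℝ) (d : EuclideanSpace ℝ (Fin n)) : ℝ :=
  ⟪d, Matrix.toEuclideanLin B d⟫

/-- `B ⪰ σ I`, i.e. `⟨d, B d⟩ ≥ σ‖d‖²` for all `d`. -/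
def MatGE (B : Matrix (Fin n) (Fin n) ℝ) (σ : ℝ) : Prop :=
  ∀ d : EuclideanSpace ℝ (Fin n), σ * ‖d‖ ^ 2 ≤ mquad B d

/-- `Q_j(x,d) = ⟨∇f_j(x), d⟩ + (1/2)⟨d, B_j d⟩ + g_j(x+d) − g_j(x)`. -/
def Qj (f g : Fin m → EuclideanSpace ℝ (Fin n) → ℝ)
    (B : Fin m → Matrix (Fin n) (Fin n) ℝ) (x d : EuclideanSpace ℝ (Fin n)) (j : Fin m) : ℝ :=
  ⟪gradient (f j) x, d⟫ + (1 / 2) * mquad (B j) d + g j (x + d) - g j x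

/-- `Q(x,d) = max_j Q_j(x,d)`. -/
def Qmax (f g : Fin m → EuclideanSpace ℝ (Fin n) → ℝ)
    (B : Fin m → Matrix (Fin n) (Fin n) ℝ) (x d : EuclideanSpace ℝ (Fin n)) : ℝ :=
  ⨆ j, Qj f g B x d j

/-- `θ(x) = inf_d Q(x,d)`. -/
def theta (f g : Fin m → EuclideanSpace ℝ (Fin n) → ℝ)
    (B : Fin m → Matrix (Fin n) (Fin n) ℝ) (x : EuclideanSpace ℝ (Fin n)) : ℝ :=
  ⨅ d, Qmax f g B x d

/-- One-sided directional derivative. -/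
def HasDirDeriv (F : EuclideanSpace ℝ (Fin n) → ℝ) (x d : EuclideanSpace ℝ (Fin n)) (c : ℝ) : Prop :=
  Tendsto (fun t : ℝ => (F (x + t • d) - F x) / t) (𝓝[>] (0 : ℝ)) (𝓝 c)

/-- `x` is a critical point of `F = (F_1,…,F_m)`. -/
def IsCriticalPt (F : Fin m → EuclideanSpace ℝ (Fin n) → ℝ) (x : EuclideanSpace ℝ (Fin n)) : Prop :=
  ¬ ∃ d : EuclideanSpace ℝ (Fin n), ∀ j, ∃ c : ℝ, HasDirDeriv (F j) x d c ∧ c < 0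

/-- `ξ` is a subgradient of `g` at `y`. -/
def IsSubgradAt (g : EuclideanSpace ℝ (Fin n) → ℝ) (y ξ : EuclideanSpace ℝ (Fin n)) : Prop :=
  ∀ z, g y + ⟪ξ, z - y⟫ ≤ g z

/-- Hessian of `f` as the derivative of the gradient. -/
def hess (f : EuclideanSpace ℝ (Fin n) → ℝ) (z : EuclideanSpace ℝ (Fin n)) :
    EuclideanSpace ℝ (Fin n) →L[ℝ] EuclideanSpace ℝ (Fin n) :=
  fderiv ℝ (fun y => gradient f y) z

lemma mquad_smul (B : Matrix (Fin n) (Fin n) ℝ) (t : ℝ) (d : EuclideanSpace ℝ (Fin n)) :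
    mquad B (t • d) = t ^ 2 * mquad B d := by
  rw [mquad, mquad, map_smul, real_inner_smul_left, real_inner_smul_right]
  ring

lemma mquad_nonneg {B : Matrix (Fin n) (Fin n) ℝ} {σ : ℝ} (hB : MatGE B σ) (hσ : 0 ≤ σ)
    (d : EuclideanSpace ℝ (Fin n)) : 0 ≤ mquad B d :=
  (by positivity : 0 ≤ σ * ‖d‖ ^ 2).trans (hB d)

section DirDeriv

variable {F : EuclideanSpace ℝ (Fin n) → ℝ} {x d : EuclideanSpace ℝ (Fin n)} {c : ℝ}

lemma hasDirDeriv_iff_hasDerivWithinAt :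
    HasDirDeriv F x d c ↔ HasDerivWithinAt (fun t : ℝ => F (x + t • d)) c (Set.Ioi 0) 0 := by
  rw [hasDerivWithinAt_iff_tendsto_slope' Set.self_notMem_Ioi, HasDirDeriv]
  refine tendsto_congr fun t => ?_
  simp [slope_def_field]

lemma _root_.DifferentiableAt.hasDirDeriv_gradient (hF : DifferentiableAt ℝ F x) :
    HasDirDeriv F x d ⟪gradient F x, d⟫ := by
  have hline : HasDerivAt (fun t : ℝ => x + t • d) d 0 := by
    simpa using ((hasDerivAt_id (0 : ℝ)).smul_const d).const_add x
  have hF' : HasFDerivAt F (InnerProductSpace.toDual ℝ _ (gradient F x)) (x + (0 : ℝ) • d) := by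
    simpa using hasGradientAt_iff_hasFDerivAt.mp hF.hasGradientAt
  have h := hF'.comp_hasDerivAt 0 hline
  rw [InnerProductSpace.toDual_apply_apply] at h
  exact hasDirDeriv_iff_hasDerivWithinAt.2 h.hasDerivWithinAt

lemma _root_.ConvexOn.exists_hasDirDeriv_le (hF : ConvexOn ℝ Set.univ F)
    (x d : EuclideanSpace ℝ (Fin n)) :
    ∃ c, HasDirDeriv F x d c ∧ c ≤ F (x + d) - F x := by
  have hline : ConvexOn ℝ Set.univ (fun t : ℝ => F (x + t • d)) := by
    have h : (fun t : ℝ => F (x + t • d)) = F ∘ AffineMap.lineMap x (x + d) := by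
      ext t
      simp [AffineMap.lineMap_apply, add_comm]
    simpa [h] using hF.comp_affineMap (AffineMap.lineMap x (x + d))
  have h0 : (0 : ℝ) ∈ interior Set.univ := by simp
  refine ⟨_, hasDirDeriv_iff_hasDerivWithinAt.2
    (hline.hasDerivWithinAt_rightDeriv_of_mem_interior h0), ?_⟩
  simpa [slope_def_field] using
    hline.rightDeriv_le_slope_of_mem_interior h0 (Set.mem_univ 1) one_pos

end DirDeriv

section Model

variable {f g : Fin m → EuclideanSpace ℝ (Fin n) → ℝ} {B : Fin m → Matrix (Fin n) (Fin n) ℝ}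
  {x : EuclideanSpace ℝ (Fin n)}

lemma Qj_le_Qmax (d : EuclideanSpace ℝ (Fin n)) (j : Fin m) : Qj f g B x d j ≤ Qmax f g B x d :=
  le_ciSup (Set.finite_range _).bddAbove j

lemma Qmax_lt_iff [Nonempty (Fin m)] {d : EuclideanSpace ℝ (Fin n)} {a : ℝ} :
    Qmax f g B x d < a ↔ ∀ j, Qj f g B x d j < a := by
  obtain ⟨j₀, hj₀⟩ := exists_eq_ciSup_of_finite (f := Qj f g B x d)
  exact ⟨fun h j => (Qj_le_Qmax d j).trans_lt h, fun h => by rw [Qmax, ← hj₀]; exact h j₀⟩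

lemma Qj_zero (j : Fin m) : Qj f g B x 0 j = 0 := by
  simp [Qj, mquad]

lemma Qmax_zero [Nonempty (Fin m)] : Qmax f g B x 0 = 0 := by
  simp [Qmax, Qj_zero]

lemma Qj_smul (t : ℝ) (d : EuclideanSpace ℝ (Fin n)) (j : Fin m) :
    Qj f g B x (t • d) j =
      t * ⟪gradient (f j) x, d⟫ + 1 / 2 * (t ^ 2 * mquad (B j) d) + (g j (x + t • d) - g j x) := by
  rw [Qj, mquad_smul, real_inner_smul_right]
  ring

lemma exists_hasDirDeriv_add_le_Qj {j : Fin m} (hf : DifferentiableAt ℝ (f j) x)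
    (hg : ConvexOn ℝ Set.univ (g j)) (d : EuclideanSpace ℝ (Fin n)) :
    ∃ c, HasDirDeriv (fun y => f j y + g j y) x d c ∧
      c + 1 / 2 * mquad (B j) d ≤ Qj f g B x d j := by
  obtain ⟨ℓ, hℓ, hℓle⟩ := hg.exists_hasDirDeriv_le x d
  refine ⟨⟪gradient (f j) x, d⟫ + ℓ, hasDirDeriv_iff_hasDerivWithinAt.2
    ((hasDirDeriv_iff_hasDerivWithinAt.1 hf.hasDirDeriv_gradient).add
      (hasDirDeriv_iff_hasDerivWithinAt.1 hℓ)), ?_⟩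
  rw [Qj]
  linarith

lemma HasDirDeriv.hasDerivWithinAt_Qj_smul {j : Fin m} {d : EuclideanSpace ℝ (Fin n)} {c : ℝ}
    (hF : HasDirDeriv (fun y => f j y + g j y) x d c) (hf : DifferentiableAt ℝ (f j) x) :
    HasDerivWithinAt (fun t : ℝ => Qj f g B x (t • d) j) c (Set.Ioi 0) 0 := by
  have hg : HasDerivWithinAt (fun t : ℝ => g j (x + t • d) - g j x)
      (c - ⟪gradient (f j) x, d⟫) (Set.Ioi 0) 0 := by
    have h := (hasDirDeriv_iff_hasDerivWithinAt.1 hF).sub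
      (hasDirDeriv_iff_hasDerivWithinAt.1 (hf.hasDirDeriv_gradient (d := d)))
    exact (h.sub_const (g j x)).congr (fun t _ => by simp) (by simp)
  have hpoly : HasDerivWithinAt
      (fun t : ℝ => t * ⟪gradient (f j) x, d⟫ + 1 / 2 * (t ^ 2 * mquad (B j) d))
      ⟪gradient (f j) x, d⟫ (Set.Ioi 0) 0 := by
    have h := ((hasDerivAt_id' (0 : ℝ)).mul_const ⟪gradient (f j) x, d⟫).add
      (((hasDerivAt_pow 2 (0 : ℝ)).mul_const (mquad (B j) d)).const_mul (1 / 2 : ℝ))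
    exact h.hasDerivWithinAt.congr_deriv (by simp)
  simp_rw [Qj_smul]
  exact (hpoly.add hg).congr_deriv (by ring)

lemma Qj_half_smul_le {j : Fin m} (hg : ConvexOn ℝ Set.univ (g j))
    (d : EuclideanSpace ℝ (Fin n)) :
    Qj f g B x ((1 / 2 : ℝ) • d) j ≤ 1 / 2 * Qj f g B x d j - 1 / 8 * mquad (B j) d := by
  have hmid := hg.2 (Set.mem_univ (x + d)) (Set.mem_univ x) (by norm_num : (0 : ℝ) ≤ 1 / 2)
    (by norm_num : (0 : ℝ) ≤ 1 / 2) (by norm_num)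
  rw [show (1 / 2 : ℝ) • (x + d) + (1 / 2 : ℝ) • x = x + (1 / 2 : ℝ) • d by module,
    smul_eq_mul, smul_eq_mul] at hmid
  rw [Qj_smul, Qj]
  linarith

lemma Qmax_le_neg_norm_sq_of_isMin [Nonempty (Fin m)] {σ : ℝ}
    (hg : ∀ j, ConvexOn ℝ Set.univ (g j)) (hB : ∀ j, MatGE (B j) σ) {d₀ : EuclideanSpace ℝ (Fin n)}
    (hd₀ : ∀ d, Qmax f g B x d₀ ≤ Qmax f g B x d) :
    Qmax f g B x d₀ ≤ -(σ / 4) * ‖d₀‖ ^ 2 := by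
  have hhalf : Qmax f g B x ((1 / 2 : ℝ) • d₀) ≤ 1 / 2 * Qmax f g B x d₀ - σ / 8 * ‖d₀‖ ^ 2 :=
    ciSup_le fun j => by
      have hQj : Qj f g B x d₀ j ≤ Qmax f g B x d₀ := Qj_le_Qmax d₀ j
      have hQj_half : Qj f g B x ((1 / 2 : ℝ) • d₀) j ≤
          1 / 2 * Qj f g B x d₀ j - 1 / 8 * mquad (B j) d₀ := Qj_half_smul_le (hg j) d₀
      linarith [hB j d₀]
  linarith [hd₀ ((1 / 2 : ℝ) • d₀)]

theorem isCriticalPt_iff_forall_Qmax_nonneg [Nonempty (Fin m)] {σ : ℝ} (hσ : 0 ≤ σ)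
    (hf : ∀ j, DifferentiableAt ℝ (f j) x) (hg : ∀ j, ConvexOn ℝ Set.univ (g j))
    (hB : ∀ j, MatGE (B j) σ) :
    IsCriticalPt (fun j y => f j y + g j y) x ↔ ∀ d, 0 ≤ Qmax f g B x d := by
  constructor
  · intro hcrit d
    by_contra! hneg
    refine hcrit ⟨d, fun j => ?_⟩
    obtain ⟨c, hc, hcle⟩ := exists_hasDirDeriv_add_le_Qj (B := B) (hf j) (hg j) d
    have hQj : Qj f g B x d j ≤ Qmax f g B x d := Qj_le_Qmax d j
    exact ⟨c, hc, by linarith [mquad_nonneg (hB j) hσ d]⟩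
  · rintro hnonneg ⟨d, hd⟩
    choose c hc hneg using hd
    -- `Q_j(x, t d) / t → F_j'(x; d) < 0` as `t → 0⁺`: all `Q_j(x, t d)` are negative for small `t`.
    have hslope : ∀ j, ∀ᶠ t in 𝓝[>] (0 : ℝ), slope (fun t : ℝ => Qj f g B x (t • d) j) 0 t < 0 :=
      fun j => ((hasDerivWithinAt_iff_tendsto_slope' Set.self_notMem_Ioi).1
        ((hc j).hasDerivWithinAt_Qj_smul (hf j))).eventually_lt_const (hneg j)
    obtain ⟨t, ht, htpos⟩ := ((eventually_all.2 hslope).and self_mem_nhdsWithin).exists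
    have hQneg : Qmax f g B x (t • d) < 0 := Qmax_lt_iff.2 fun j => by
      have h := ht j
      rwa [slope_def_field, zero_smul, Qj_zero, sub_zero, sub_zero, div_lt_iff₀ htpos,
        zero_mul] at h
    exact (hnonneg (t • d)).not_gt hQneg

end Model

theorem critical_iff_dzero_iff_theta_zero_general
    (n m : ℕ) (hm : 1 ≤ m)
    (f g : Fin m → EuclideanSpace ℝ (Fin n) → ℝ)
    (hfdiff : ∀ j, ContDiff ℝ 1 (f j))
    (hgconv : ∀ j, ConvexOn ℝ Set.univ (g j))
    (B : Fin m → Matrix (Fin n) (Fin n) ℝ)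
    (σ : ℝ) (hσ : 0 < σ)
    (hB : ∀ j, MatGE (B j) σ)
    (x d0 : EuclideanSpace ℝ (Fin n))
    (hd0min : ∀ d, Qmax f g B x d0 ≤ Qmax f g B x d) :
    (IsCriticalPt (fun j y => f j y + g j y) x ↔ d0 = 0) ∧
    (IsCriticalPt (fun j y => f j y + g j y) x ↔ theta f g B x = 0) := by
  have : Nonempty (Fin m) := ⟨⟨0, hm⟩⟩
  have hQ0 : Qmax f g B x 0 = 0 := Qmax_zero
  have hcrit : IsCriticalPt (fun j y => f j y + g j y) x ↔ Qmax f g B x d0 = 0 := by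
    rw [isCriticalPt_iff_forall_Qmax_nonneg hσ.le
      (fun j => (hfdiff j).differentiable one_ne_zero x) hgconv hB]
    exact ⟨fun h => le_antisymm (hQ0 ▸ hd0min 0) (h d0), fun h d => h ▸ hd0min d⟩
  have hd0 : Qmax f g B x d0 = 0 ↔ d0 = 0 := by
    refine ⟨fun h => ?_, fun h => h ▸ hQ0⟩
    have hbound := Qmax_le_neg_norm_sq_of_isMin hgconv hB hd0min
    rw [h] at hbound
    have hnorm : ‖d0‖ ^ 2 ≤ 0 := by nlinarith
    exact norm_eq_zero.1 (pow_eq_zero_iff two_ne_zero |>.1 (le_antisymm hnorm (sq_nonneg _)))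
  have htheta : theta f g B x = Qmax f g B x d0 :=
    ciInf_eq_of_forall_ge_of_forall_gt_exists_lt hd0min fun _ hw => ⟨d0, hw⟩
  exact ⟨hcrit.trans hd0, htheta ▸ hcrit⟩

/-- Suppose `σ > 0`, each `B_j ⪰ σI`, and each `∇f_j` is Lipschitz
continuous. Then for `x ∈ ℝⁿ` the following are equivalent: (i) `x` is a critical point
of `F`; (ii) `d(x) = 0`, where `d(x)` is the unique minimizer of `Q(x,·)`;
(iii) `θ(x) = 0`. -/
theorem critical_iff_dzero_iff_theta_zero
    (n m : ℕ) (hn : 1 ≤ n) (hm : 1 ≤ m)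
    (f g : Fin m → EuclideanSpace ℝ (Fin n) → ℝ)
    (hfconv : ∀ j, ConvexOn ℝ Set.univ (f j))
    (hfdiff : ∀ j, ContDiff ℝ 1 (f j))
    (hLip : ∀ j, ∃ L : NNReal, LipschitzWith L (fun y => gradient (f j) y))
    (hgconv : ∀ j, ConvexOn ℝ Set.univ (g j))
    (hgcont : ∀ j, Continuous (g j))
    (B : Fin m → Matrix (Fin n) (Fin n) ℝ)
    (hBsymm : ∀ j, (B j).IsSymm)
    (σ : ℝ) (hσ : 0 < σ)
    (hB : ∀ j, MatGE (B j) σ)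
    (x d0 : EuclideanSpace ℝ (Fin n))
    (hd0min : ∀ d, Qmax f g B x d0 ≤ Qmax f g B x d) :
    (IsCriticalPt (fun j y => f j y + g j y) x ↔ d0 = 0) ∧
    (IsCriticalPt (fun j y => f j y + g j y) x ↔ theta f g B x = 0) :=
  critical_iff_dzero_iff_theta_zero_general n m hm f g hfdiff hgconv B σ hσ hB x d0 hd0min

end NPQN
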